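/- Let K, λ ∈ ℝ, let I ⊆ ℝ be an open interval, let f : I → ℝ be continuous, and let t₁ < t₂ < t₃ < t₄ be points of I with t₄ − t₁ < D_K. If f satisfies the Jensen supersolution inequality for the parameters (t₁, t₂, t₃) and for the parameters (t₂, t₃, t₄), then f also satisfies the Jensen supersolution inequality for the parameters (t₁, t₂, t₄) and for the parameters (t₁, t₃, t₄). -/

import Mathlib

open Set MeasureTheory

/-- `x < D_K`, where `D_K := π/√(-K)` if `K < 0` and `D_K := ∞` if `K ≥ 0`. -/
def LtDK (K x : ℝ) : Prop := K < 0 → x < Real.pi / Real.sqrt (-K)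

/-- `x ≤ D_K`, where `D_K := π/√(-K)` if `K < 0` and `D_K := ∞` if `K ≥ 0`. -/
def LeDK (K x : ℝ) : Prop := K < 0 → x ≤ Real.pi / Real.sqrt (-K)

/-- `g : ℝ → ℝ` is a twice differentiable solution of `g'' - K g = lam` (on all of `ℝ`). -/
def IsSol (K lam : ℝ) (g : ℝ → ℝ) : Prop :=
  Differentiable ℝ g ∧ ∀ t, HasDerivAt (deriv g) (K * g t + lam) t

/-- `g` is a twice differentiable solution of `g'' - K g = lam` on the set `s`. -/
def IsSolOn (K lam : ℝ) (g : ℝ → ℝ) (s : Set ℝ) : Prop :=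
  ∀ t ∈ s, DifferentiableAt ℝ g t ∧ HasDerivAt (deriv g) (K * g t + lam) t

/-- `f` is a subsolution of `f'' - K f = lam` in the sense of Jensen on `s`:
for all `t₁ < t₂` in `s` with `t₂ - t₁ < D_K`, the (unique) solution `g` of the ODE
with `g t₁ = f t₁` and `g t₂ = f t₂` satisfies `f ≤ g` on `[t₁, t₂]`. -/
def JensenSub (K lam : ℝ) (f : ℝ → ℝ) (s : Set ℝ) : Prop :=
  ∀ t₁ ∈ s, ∀ t₂ ∈ s, t₁ < t₂ → LtDK K (t₂ - t₁) →
    ∀ g : ℝ → ℝ, IsSol K lam g → g t₁ = f t₁ → g t₂ = f t₂ →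
      ∀ t ∈ Set.Icc t₁ t₂, f t ≤ g t

/-- `f` is a supersolution of `f'' - K f = lam` in the sense of Jensen on `s`. -/
def JensenSuper (K lam : ℝ) (f : ℝ → ℝ) (s : Set ℝ) : Prop :=
  ∀ t₁ ∈ s, ∀ t₂ ∈ s, t₁ < t₂ → LtDK K (t₂ - t₁) →
    ∀ g : ℝ → ℝ, IsSol K lam g → g t₁ = f t₁ → g t₂ = f t₂ →
      ∀ t ∈ Set.Icc t₁ t₂, g t ≤ f t

/-- `f` is a distributional subsolution of `f'' - K f ≥ lam` on `I`. -/
def DistribSub (K lam : ℝ) (f : ℝ → ℝ) (I : Set ℝ) : Prop :=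
  ∀ φ : ℝ → ℝ, ContDiff ℝ (⊤ : ℕ∞) φ → HasCompactSupport φ → tsupport φ ⊆ I →
    (∀ x, 0 ≤ φ x) →
    0 ≤ ∫ t in I, (f t * deriv (deriv φ) t - K * f t * φ t - lam * φ t)

/-- `f` is a distributional supersolution of `f'' - K f ≤ lam` on `I`. -/
def DistribSuper (K lam : ℝ) (f : ℝ → ℝ) (I : Set ℝ) : Prop :=
  ∀ φ : ℝ → ℝ, ContDiff ℝ (⊤ : ℕ∞) φ → HasCompactSupport φ → tsupport φ ⊆ I →
    (∀ x, 0 ≤ φ x) →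
    (∫ t in I, (f t * deriv (deriv φ) t - K * f t * φ t - lam * φ t)) ≤ 0

/-- `f` satisfies the Jensen subsolution inequality for the parameters `(t₁, t₂, t₃)`:
`f t₂ ≤ g t₂` for the (unique) solution `g` of `g'' - K g = lam`
with `g t₁ = f t₁` and `g t₃ = f t₃`. -/
def JensenSubIneq (K lam : ℝ) (f : ℝ → ℝ) (t₁ t₂ t₃ : ℝ) : Prop :=
  ∀ g : ℝ → ℝ, IsSol K lam g → g t₁ = f t₁ → g t₃ = f t₃ → f t₂ ≤ g t₂

/-- `f` satisfies the Jensen supersolution inequality for the parameters `(t₁, t₂, t₃)`. -/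
def JensenSuperIneq (K lam : ℝ) (f : ℝ → ℝ) (t₁ t₂ t₃ : ℝ) : Prop :=
  ∀ g : ℝ → ℝ, IsSol K lam g → g t₁ = f t₁ → g t₃ = f t₃ → g t₂ ≤ f t₂

noncomputable def sK (K x : ℝ) : ℝ :=
  if K < 0 then Real.sin (Real.sqrt (-K) * x) / Real.sqrt (-K)
  else if 0 < K then Real.sinh (Real.sqrt K * x) / Real.sqrt K
  else x

noncomputable def cK (K x : ℝ) : ℝ :=
  if K < 0 then Real.cos (Real.sqrt (-K) * x)
  else if 0 < K then Real.cosh (Real.sqrt K * x)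
  else 1

lemma sK_zero (K : ℝ) : sK K 0 = 0 := by
  unfold sK; split_ifs <;> simp

lemma sK_pos (K x : ℝ) (hx : 0 < x) (hD : K < 0 → x < Real.pi / Real.sqrt (-K)) :
    0 < sK K x := by
  unfold sK
  split_ifs with h h'
  · have hω : 0 < Real.sqrt (-K) := Real.sqrt_pos.2 (by linarith)
    have := hD h
    have hxπ : Real.sqrt (-K) * x < Real.pi := by
      rw [lt_div_iff₀ hω] at this; linarith [this]
    exact div_pos (Real.sin_pos_of_pos_of_lt_pi (by positivity) hxπ) hω
  · have hω : 0 < Real.sqrt K := Real.sqrt_pos.2 h'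
    exact div_pos (by positivity) hω
  · exact hx

lemma sin_id (a b c : ℝ) :
    Real.sin a * Real.sin b + Real.sin c * Real.sin (a + b + c)
      = Real.sin (a + c) * Real.sin (b + c) := by
  simp only [Real.sin_add, Real.cos_add]
  linear_combination (-(Real.sin a * Real.sin b)) * (Real.sin_sq_add_cos_sq c)

lemma sinh_id (a b c : ℝ) :
    Real.sinh a * Real.sinh b + Real.sinh c * Real.sinh (a + b + c)
      = Real.sinh (a + c) * Real.sinh (b + c) := by
  simp only [Real.sinh_add, Real.cosh_add]
  linear_combination (-(Real.sinh a * Real.sinh b)) * (Real.cosh_sq_sub_sinh_sq c)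

lemma sK_identity (K p q r : ℝ) :
    sK K p * sK K q + sK K r * sK K (p + q + r) = sK K (p + r) * sK K (q + r) := by
  unfold sK
  split_ifs with h h'
  · have hω : 0 < Real.sqrt (-K) := Real.sqrt_pos.2 (by linarith)
    have key := sin_id (Real.sqrt (-K) * p) (Real.sqrt (-K) * q) (Real.sqrt (-K) * r)
    field_simp
    simp only [mul_add]
    linear_combination key
  · have hω : 0 < Real.sqrt K := Real.sqrt_pos.2 h'
    have key := sinh_id (Real.sqrt K * p) (Real.sqrt K * q) (Real.sqrt K * r)
    field_simp
    simp only [mul_add]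
    linear_combination key
  · ring

lemma hasDerivAt_sK (K x : ℝ) : HasDerivAt (sK K) (cK K x) x := by
  unfold sK cK
  split_ifs with h h'
  · set ω := Real.sqrt (-K) with hωdef
    have hω : 0 < ω := Real.sqrt_pos.2 (by linarith)
    have hin : HasDerivAt (fun y : ℝ => ω * y) ω x := by
      simpa using (hasDerivAt_id x).const_mul ω
    have h1 : HasDerivAt (fun y : ℝ => Real.sin (ω * y)) (Real.cos (ω * x) * ω) x := by
      exact (Real.hasDerivAt_sin (ω * x)).comp x hin
    have h2 := h1.div_const ω
    refine h2.congr_deriv ?_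
    field_simp
  · set ω := Real.sqrt K with hωdef
    have hω : 0 < ω := Real.sqrt_pos.2 h'
    have hin : HasDerivAt (fun y : ℝ => ω * y) ω x := by
      simpa using (hasDerivAt_id x).const_mul ω
    have h1 : HasDerivAt (fun y : ℝ => Real.sinh (ω * y)) (Real.cosh (ω * x) * ω) x := by
      exact (Real.hasDerivAt_sinh (ω * x)).comp x hin
    have h2 := h1.div_const ω
    refine h2.congr_deriv ?_
    field_simp
  · exact hasDerivAt_id' x

lemma hasDerivAt_cK (K x : ℝ) : HasDerivAt (cK K) (K * sK K x) x := by
  unfold sK cK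
  split_ifs with h h'
  · set ω := Real.sqrt (-K) with hωdef
    have hω : 0 < ω := Real.sqrt_pos.2 (by linarith)
    have hω2 : ω ^ 2 = -K := Real.sq_sqrt (by linarith)
    have hin : HasDerivAt (fun y : ℝ => ω * y) ω x := by
      simpa using (hasDerivAt_id x).const_mul ω
    have h1 : HasDerivAt (fun y : ℝ => Real.cos (ω * y)) (-Real.sin (ω * x) * ω) x := by
      exact (Real.hasDerivAt_cos (ω * x)).comp x hin
    convert h1 using 1
    field_simp
    linear_combination Real.sin (ω * x) * hω2
  · set ω := Real.sqrt K with hωdef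
    have hω : 0 < ω := Real.sqrt_pos.2 h'
    have hω2 : ω ^ 2 = K := Real.sq_sqrt h'.le
    have hin : HasDerivAt (fun y : ℝ => ω * y) ω x := by
      simpa using (hasDerivAt_id x).const_mul ω
    have h1 : HasDerivAt (fun y : ℝ => Real.cosh (ω * y)) (Real.sinh (ω * x) * ω) x := by
      exact (Real.hasDerivAt_cosh (ω * x)).comp x hin
    convert h1 using 1
    field_simp
    linear_combination (-Real.sinh (ω * x)) * hω2
  · have hK : K = 0 := le_antisymm (not_lt.1 h') (not_lt.1 h)
    simp [hK, hasDerivAt_const]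




lemma hasDerivAt_sK_shift (K α a : ℝ) (t : ℝ) :
    HasDerivAt (fun t => α * sK K (t - a)) (α * cK K (t - a)) t := by
  have h1 : HasDerivAt (fun t : ℝ => sK K (t - a)) (cK K (t - a)) t := by
    exact ((hasDerivAt_sK K (t - a)).comp t ((hasDerivAt_id t).sub_const a)).congr_deriv (mul_one _)
  exact h1.const_mul α

lemma hasDerivAt_cK_shift (K α a : ℝ) (t : ℝ) :
    HasDerivAt (fun t => α * cK K (t - a)) (α * (K * sK K (t - a))) t := by
  have h1 : HasDerivAt (fun t : ℝ => cK K (t - a)) (K * sK K (t - a)) t := by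
    exact ((hasDerivAt_cK K (t - a)).comp t ((hasDerivAt_id t).sub_const a)).congr_deriv (mul_one _)
  exact h1.const_mul α

lemma hasDerivAt_sK_refl (K α a : ℝ) (t : ℝ) :
    HasDerivAt (fun t => α * sK K (a - t)) (-(α * cK K (a - t))) t := by
  have hin : HasDerivAt (fun t : ℝ => a - t) (-1) t := by
    exact ((hasDerivAt_const t a).sub (hasDerivAt_id t)).congr_deriv (by simp)
  have h1 : HasDerivAt (fun t : ℝ => sK K (a - t)) (cK K (a - t) * (-1)) t :=
    (hasDerivAt_sK K (a - t)).comp t hin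
  have := h1.const_mul α
  refine this.congr_deriv ?_
  ring

lemma hasDerivAt_cK_refl (K α a : ℝ) (t : ℝ) :
    HasDerivAt (fun t => -(α * cK K (a - t))) (α * (K * sK K (a - t))) t := by
  have hin : HasDerivAt (fun t : ℝ => a - t) (-1) t := by
    exact ((hasDerivAt_const t a).sub (hasDerivAt_id t)).congr_deriv (by simp)
  have h1 : HasDerivAt (fun t : ℝ => cK K (a - t)) (K * sK K (a - t) * (-1)) t :=
    (hasDerivAt_cK K (a - t)).comp t hin
  have := (h1.const_mul α).neg
  refine this.congr_deriv ?_
  ring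

lemma isSol_add_shift (K lam α a : ℝ) (g : ℝ → ℝ) (hg : IsSol K lam g) :
    IsSol K lam (fun t => g t + α * sK K (t - a)) := by
  obtain ⟨hgd, hg2⟩ := hg
  have hderiv : deriv (fun t => g t + α * sK K (t - a))
      = fun t => deriv g t + α * cK K (t - a) := by
    funext t
    rw [deriv_fun_add (hgd t) (hasDerivAt_sK_shift K α a t).differentiableAt,
      (hasDerivAt_sK_shift K α a t).deriv]
  refine ⟨fun t => (hgd t).add (hasDerivAt_sK_shift K α a t).differentiableAt, fun t => ?_⟩
  rw [hderiv]
  have := (hg2 t).add (hasDerivAt_cK_shift K α a t)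
  refine this.congr_deriv ?_
  ring

lemma isSol_add_refl (K lam α a : ℝ) (g : ℝ → ℝ) (hg : IsSol K lam g) :
    IsSol K lam (fun t => g t + α * sK K (a - t)) := by
  obtain ⟨hgd, hg2⟩ := hg
  have hderiv : deriv (fun t => g t + α * sK K (a - t))
      = fun t => deriv g t + -(α * cK K (a - t)) := by
    funext t
    rw [deriv_fun_add (hgd t) (hasDerivAt_sK_refl K α a t).differentiableAt,
      (hasDerivAt_sK_refl K α a t).deriv]
  refine ⟨fun t => (hgd t).add (hasDerivAt_sK_refl K α a t).differentiableAt, fun t => ?_⟩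
  rw [hderiv]
  have := (hg2 t).add (hasDerivAt_cK_refl K α a t)
  refine this.congr_deriv ?_
  ring

theorem splitting_jensen_super_aux
    (K lam : ℝ)
    (f : ℝ → ℝ)
    (t₁ t₂ t₃ t₄ : ℝ)
    (h12 : t₁ < t₂) (h23 : t₂ < t₃) (h34 : t₃ < t₄) (hD : LtDK K (t₄ - t₁))
    (hA : JensenSuperIneq K lam f t₁ t₂ t₃) (hB : JensenSuperIneq K lam f t₂ t₃ t₄) :
    JensenSuperIneq K lam f t₁ t₂ t₄ ∧ JensenSuperIneq K lam f t₁ t₃ t₄ := by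
  have hπ : ∀ x : ℝ, 0 < x → x ≤ t₄ - t₁ → 0 < sK K x := fun x hx hle =>
    sK_pos K x hx (fun hK => lt_of_le_of_lt hle (hD hK))
  have hs21 : 0 < sK K (t₂ - t₁) := hπ _ (by linarith) (by linarith)
  have hs31 : 0 < sK K (t₃ - t₁) := hπ _ (by linarith) (by linarith)
  have hs41 : 0 < sK K (t₄ - t₁) := hπ _ (by linarith) (by linarith)
  have hs32 : 0 < sK K (t₃ - t₂) := hπ _ (by linarith) (by linarith)
  have hs42 : 0 < sK K (t₄ - t₂) := hπ _ (by linarith) (by linarith)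
  have hs43 : 0 < sK K (t₄ - t₃) := hπ _ (by linarith) (by linarith)
  have hId : sK K (t₂ - t₁) * sK K (t₄ - t₃) + sK K (t₃ - t₂) * sK K (t₄ - t₁)
      = sK K (t₃ - t₁) * sK K (t₄ - t₂) := by
    have := sK_identity K (t₂ - t₁) (t₄ - t₃) (t₃ - t₂)
    rw [show t₂ - t₁ + (t₄ - t₃) + (t₃ - t₂) = t₄ - t₁ by ring,
      show t₂ - t₁ + (t₃ - t₂) = t₃ - t₁ by ring,
      show t₄ - t₃ + (t₃ - t₂) = t₄ - t₂ by ring] at this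
    exact this
  have key : ∀ g : ℝ → ℝ, IsSol K lam g → g t₁ = f t₁ → g t₄ = f t₄ →
      g t₂ ≤ f t₂ ∧ g t₃ ≤ f t₃ := by
    intro g hg h1 h4
    have e1 : (f t₃ - g t₃) * sK K (t₂ - t₁) ≤ (f t₂ - g t₂) * sK K (t₃ - t₁) := by
      set g₁ : ℝ → ℝ := fun t => g t + ((f t₃ - g t₃) / sK K (t₃ - t₁)) * sK K (t - t₁) with hg₁
      have hsol : IsSol K lam g₁ := isSol_add_shift K lam _ _ g hg
      have hb1 : g₁ t₁ = f t₁ := by simp [hg₁, sK_zero, h1]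
      have hb3 : g₁ t₃ = f t₃ := by
        simp only [hg₁]
        field_simp
        ring
      have hle := hA g₁ hsol hb1 hb3
      simp only [hg₁] at hle
      have heq : (f t₃ - g t₃) / sK K (t₃ - t₁) * sK K (t₂ - t₁)
          = (f t₃ - g t₃) * sK K (t₂ - t₁) / sK K (t₃ - t₁) := by ring
      rw [heq] at hle
      have h' : (f t₃ - g t₃) * sK K (t₂ - t₁) / sK K (t₃ - t₁) ≤ f t₂ - g t₂ := by linarith
      exact (div_le_iff₀ hs31).mp h'
    have e2 : (f t₂ - g t₂) * sK K (t₄ - t₃) ≤ (f t₃ - g t₃) * sK K (t₄ - t₂) := by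
      set g₂ : ℝ → ℝ := fun t => g t + ((f t₂ - g t₂) / sK K (t₄ - t₂)) * sK K (t₄ - t) with hg₂
      have hsol : IsSol K lam g₂ := isSol_add_refl K lam _ _ g hg
      have hb4 : g₂ t₄ = f t₄ := by simp [hg₂, sK_zero, h4]
      have hb2 : g₂ t₂ = f t₂ := by
        simp only [hg₂]
        field_simp
        ring
      have hle := hB g₂ hsol hb2 hb4
      simp only [hg₂] at hle
      have heq : (f t₂ - g t₂) / sK K (t₄ - t₂) * sK K (t₄ - t₃)
          = (f t₂ - g t₂) * sK K (t₄ - t₃) / sK K (t₄ - t₂) := by ring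
      rw [heq] at hle
      have h' : (f t₂ - g t₂) * sK K (t₄ - t₃) / sK K (t₄ - t₂) ≤ f t₃ - g t₃ := by linarith
      exact (div_le_iff₀ hs42).mp h'
    have hXpos : 0 ≤ f t₂ - g t₂ := by
      nlinarith [mul_le_mul_of_nonneg_left e1 hs42.le,
        mul_le_mul_of_nonneg_left e2 hs21.le, mul_pos hs32 hs41]
    have hYpos : 0 ≤ f t₃ - g t₃ := by
      nlinarith
    exact ⟨by linarith, by linarith⟩
  exact ⟨fun g hg h1 h4 => (key g hg h1 h4).1, fun g hg h1 h4 => (key g hg h1 h4).2⟩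

/-- Splitting Jensen, supersolutions: if a continuous `f` on an open interval
satisfies the Jensen supersolution inequality for `(t₁, t₂, t₃)` and `(t₂, t₃, t₄)`, where
`t₁ < t₂ < t₃ < t₄` and `t₄ - t₁ < D_K`, then it satisfies it for `(t₁, t₂, t₄)` and
`(t₁, t₃, t₄)`. -/
theorem splitting_jensen_super
    (K lam : ℝ) (I : Set ℝ) (hIopen : IsOpen I) (hIinterval : I.OrdConnected)
    (f : ℝ → ℝ) (hf : ContinuousOn f I)
    (t₁ t₂ t₃ t₄ : ℝ) (ht₁ : t₁ ∈ I) (ht₂ : t₂ ∈ I) (ht₃ : t₃ ∈ I) (ht₄ : t₄ ∈ I)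
    (h12 : t₁ < t₂) (h23 : t₂ < t₃) (h34 : t₃ < t₄) (hD : LtDK K (t₄ - t₁))
    (hA : JensenSuperIneq K lam f t₁ t₂ t₃) (hB : JensenSuperIneq K lam f t₂ t₃ t₄) :
    JensenSuperIneq K lam f t₁ t₂ t₄ ∧ JensenSuperIneq K lam f t₁ t₃ t₄ := by
  exact splitting_jensen_super_aux K lam f t₁ t₂ t₃ t₄ h12 h23 h34 hD hA hB
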